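/- The Thomas–Fermi minimizer ρ^TF has compact support and belongs to L^∞(ℝ³). Moreover, if in addition V ∈ W^{1,∞}_loc(ℝ³), then ρ^TF ∈ W^{1,∞}(ℝ³). -/

import Mathlib

open MeasureTheory Filter Topology
open ENNReal

noncomputable section

/-- Position space `ℝ³`. -/
abbrev E3 := EuclideanSpace ℝ (Fin 3)

/-- The Thomas–Fermi constant `c_TF = (3/5)(6π²)^{2/3}`. -/
def cTF : ℝ := (3/5) * (6 * Real.pi ^ 2) ^ ((2:ℝ)/3)

/-- The Thomas–Fermi functional `𝓔^TF[ρ] = 2^{-2/3} c_TF ∫ ρ^{5/3} + ∫ V ρ`. -/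
def TFfun (V ρ : E3 → ℝ) : ℝ :=
  (2:ℝ) ^ (-(2:ℝ)/3) * cTF * (∫ x, ρ x ^ ((5:ℝ)/3)) + ∫ x, V x * ρ x

/-- Admissible densities for the Thomas–Fermi problem: nonnegative, in `L^{5/3}`,
with finite potential energy and total mass one. -/
def IsTFAdmissible (V ρ : E3 → ℝ) : Prop :=
  Measurable ρ ∧ (∀ x, 0 ≤ ρ x) ∧ MemLp ρ (5/3) volume ∧
    Integrable (fun x => V x * ρ x) volume ∧ (∫ x, ρ x) = 1

/-- The Thomas–Fermi energy `E^TF`. -/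
def TFenergy (V : E3 → ℝ) : ℝ :=
  sInf { e | ∃ ρ, IsTFAdmissible V ρ ∧ e = TFfun V ρ }

/-- `ρ` is a minimizer of the Thomas–Fermi functional. -/
def IsTFMinimizer (V ρ : E3 → ℝ) : Prop :=
  IsTFAdmissible V ρ ∧ TFfun V ρ = TFenergy V

/-- `V` is locally bounded (`V ∈ L^∞_loc`). -/
def LocBounded (V : E3 → ℝ) : Prop :=
  ∀ K : Set E3, IsCompact K → ∃ C : ℝ, ∀ x ∈ K, |V x| ≤ C

/-! ### Auxiliary constants -/

def aTF : ℝ := (2:ℝ) ^ (-(2:ℝ)/3) * cTF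
def bTF : ℝ := 5/3 * aTF

lemma cTF_pos : 0 < cTF := by
  have h : (0:ℝ) < 6 * Real.pi ^ 2 := by positivity
  have := Real.rpow_pos_of_pos h ((2:ℝ)/3)
  unfold cTF; positivity

lemma aTF_pos : 0 < aTF := by
  have h := cTF_pos
  have h2 : (0:ℝ) < (2:ℝ) ^ (-(2:ℝ)/3) := Real.rpow_pos_of_pos (by norm_num) _
  unfold aTF; positivity

lemma bTF_pos : 0 < bTF := by
  have := aTF_pos; unfold bTF; linarith

/-! ### Elementary real-analysis lemmas -/

lemma conv_lt (s t : ℝ) (hs : 0 < s) (ht : 0 ≤ t) (hne : t ≠ s) :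
    s ^ ((5:ℝ)/3) + 5/3 * s ^ ((2:ℝ)/3) * (t - s) < t ^ ((5:ℝ)/3) := by
  set z := t / s - 1 with hz
  have hsne : s ≠ 0 := hs.ne'
  have hz1 : -1 ≤ z := by
    have : 0 ≤ t / s := div_nonneg ht hs.le
    simp only [hz]; linarith
  have hz0 : z ≠ 0 := by
    simp only [hz, sub_ne_zero]
    intro h
    exact hne (by field_simp at h; linarith)
  have hb := one_add_mul_self_lt_rpow_one_add hz1 hz0 (by norm_num : (1:ℝ) < 5/3)
  have h1z : 1 + z = t / s := by simp [hz]
  have hs53 : (0:ℝ) < s ^ ((5:ℝ)/3) := Real.rpow_pos_of_pos hs _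
  have hts : (t / s) ^ ((5:ℝ)/3) = t ^ ((5:ℝ)/3) / s ^ ((5:ℝ)/3) :=
    Real.div_rpow ht hs.le _
  have hmul := mul_lt_mul_of_pos_left hb hs53
  rw [h1z, hts, mul_div_cancel₀ _ hs53.ne'] at hmul
  have hss : s ^ ((5:ℝ)/3) = s ^ ((2:ℝ)/3) * s := by
    have h := Real.rpow_add hs ((2:ℝ)/3) 1
    rw [Real.rpow_one] at h
    norm_num at h
    exact h
  have h2 : s ^ ((5:ℝ)/3) * z = s ^ ((2:ℝ)/3) * (t - s) := by
    rw [hss]; field_simp [hz]; rw [hz, mul_sub, mul_div_cancel₀ t hsne]; ring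
  have e : s ^ ((5:ℝ)/3) * (1 + 5/3 * z) = s ^ ((5:ℝ)/3) + 5/3 * (s ^ ((5:ℝ)/3) * z) := by ring
  rw [e, h2] at hmul
  linarith

lemma rpow32_eq (x : ℝ) (hx : 0 ≤ x) : x ^ ((3:ℝ)/2) = x * Real.sqrt x := by
  rcases eq_or_lt_of_le hx with h | h
  · rw [← h]; simp [Real.zero_rpow (by norm_num : ((3:ℝ)/2) ≠ 0)]
  · have h2 := Real.rpow_add h 1 ((1:ℝ)/2)
    rw [Real.rpow_one] at h2
    norm_num at h2
    rw [Real.sqrt_eq_rpow, h2]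

lemma q_lip {Rb u w : ℝ} (hu : 0 ≤ u) (hw : 0 ≤ w) (huR : u ≤ Rb) (hwR : w ≤ Rb) :
    |u ^ ((3:ℝ)/2) - w ^ ((3:ℝ)/2)| ≤ 3 * Real.sqrt Rb * |u - w| := by
  wlog hle : w ≤ u generalizing u w
  · rw [abs_sub_comm, abs_sub_comm u w]
    exact this hw hu hwR huR (le_of_not_ge hle)
  rw [rpow32_eq u hu, rpow32_eq w hw]
  set a := Real.sqrt u with ha
  set c := Real.sqrt w with hc
  set sR := Real.sqrt Rb with hsR
  have ha2 : a ^ 2 = u := Real.sq_sqrt hu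
  have hc2 : c ^ 2 = w := Real.sq_sqrt hw
  have ha0 : 0 ≤ a := Real.sqrt_nonneg _
  have hc0 : 0 ≤ c := Real.sqrt_nonneg _
  have hca : c ≤ a := Real.sqrt_le_sqrt hle
  have has : a ≤ sR := Real.sqrt_le_sqrt huR
  have hs0 : 0 ≤ sR := Real.sqrt_nonneg _
  have h1 : u * a - w * c ≥ 0 := by
    have := mul_le_mul hle hca hc0 hu
    linarith
  rw [abs_of_nonneg h1, abs_of_nonneg (by linarith : (0:ℝ) ≤ u - w)]
  rw [← ha2, ← hc2]
  nlinarith [mul_nonneg (mul_nonneg (sub_nonneg.2 has) (sub_nonneg.2 hca)) (add_nonneg ha0 hc0),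
    mul_nonneg (sub_nonneg.2 hca) (sq_nonneg c), mul_nonneg (sub_nonneg.2 hca) (mul_nonneg ha0 hc0),
    mul_nonneg (sub_nonneg.2 hca) (sq_nonneg (a - c)), sq_nonneg (a - c), sq_nonneg (a + c)]

/-! ### The explicit Thomas–Fermi profile -/

def sfun (l v : ℝ) : ℝ := (max (l - v) 0 / bTF) ^ ((3:ℝ)/2)

lemma sfun_nonneg (l v : ℝ) : 0 ≤ sfun l v :=
  Real.rpow_nonneg (div_nonneg (le_max_right _ _) bTF_pos.le) _

lemma sfun_zero {l v : ℝ} (h : l ≤ v) : sfun l v = 0 := by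
  unfold sfun
  rw [max_eq_right (sub_nonpos.2 h), zero_div, Real.zero_rpow (by norm_num)]

lemma sfun_le_bound {l v : ℝ} (hl : 0 ≤ l) (hv : 0 ≤ v) :
    sfun l v ≤ (l / bTF) ^ ((3:ℝ)/2) := by
  apply Real.rpow_le_rpow (div_nonneg (le_max_right _ _) bTF_pos.le)
  · apply (div_le_div_iff_of_pos_right bTF_pos).2
    exact max_le (by linarith) hl
  · norm_num

lemma measurable_sfun_comp {V : E3 → ℝ} (hVm : Measurable V) (l : ℝ) :
    Measurable (fun x => sfun l (V x)) := by
  unfold sfun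
  exact (Real.continuous_rpow_const (by norm_num)).measurable.comp
    (((measurable_const.sub hVm).max measurable_const).div_const _)

/-! ### Compactness and integrability helpers -/

lemma sublevel_compact {V : E3 → ℝ} (hVinf : Tendsto V (cocompact E3) atTop) (c : ℝ) :
    ∃ K : Set E3, IsCompact K ∧ ∀ x ∉ K, c < V x := by
  have h : ∀ᶠ x in cocompact E3, c < V x := hVinf.eventually (eventually_gt_atTop c)
  rw [hasBasis_cocompact.eventually_iff] at h
  obtain ⟨K, hK, hKs⟩ := h
  exact ⟨K, hK, fun x hx => hKs hx⟩

lemma integrable_of_bdd_cpt {f : E3 → ℝ} (hm : AEStronglyMeasurable f volume)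
    {K : Set E3} (hK : IsCompact K) {C : ℝ}
    (hb : ∀ x, |f x| ≤ C) (h0 : ∀ x ∉ K, f x = 0) : Integrable f volume := by
  refine Integrable.mono' (g := K.indicator fun _ => C) ?_ hm ?_
  · exact (integrable_indicator_iff hK.measurableSet).2
      (integrableOn_const hK.measure_lt_top.ne)
  · filter_upwards with x
    by_cases hx : x ∈ K
    · simp only [Set.indicator_of_mem hx, Real.norm_eq_abs]; exact hb x
    · simp only [Set.indicator_of_notMem hx, Real.norm_eq_abs, h0 x hx, abs_zero, le_refl]

lemma memLp53_of_bdd_cpt {f : E3 → ℝ} (hm : AEStronglyMeasurable f volume)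
    {K : Set E3} (hK : IsCompact K) {C : ℝ}
    (hb : ∀ x, |f x| ≤ C) (h0 : ∀ x ∉ K, f x = 0) : MemLp f (5/3) volume := by
  refine MemLp.mono' (g := K.indicator fun _ => C) ?_ hm ?_
  · exact memLp_indicator_const _ hK.measurableSet C (Or.inr hK.measure_lt_top.ne)
  · filter_upwards with x
    by_cases hx : x ∈ K
    · simp only [Set.indicator_of_mem hx, Real.norm_eq_abs]; exact hb x
    · simp only [Set.indicator_of_notMem hx, Real.norm_eq_abs, h0 x hx, abs_zero, le_refl]

lemma integrable_rpow53 {ρ : E3 → ℝ} (h0 : ∀ x, 0 ≤ ρ x) (hmem : MemLp ρ (5/3) volume) :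
    Integrable (fun x => ρ x ^ ((5:ℝ)/3)) volume := by
  have hne0 : (5/3 : ℝ≥0∞) ≠ 0 := by
    rw [ne_eq, ENNReal.div_eq_zero_iff]
    simp
  have hnetop : (5/3 : ℝ≥0∞) ≠ ⊤ := (ENNReal.div_lt_top (by simp) (by simp)).ne
  have h := hmem.integrable_norm_rpow hne0 hnetop
  have heq : (5/3 : ℝ≥0∞).toReal = (5:ℝ)/3 := by
    rw [ENNReal.toReal_div]; norm_num
  refine h.congr (Eventually.of_forall fun x => ?_)
  simp only [heq, Real.norm_eq_abs, abs_of_nonneg (h0 x)]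

lemma Rfun_integrable {V : E3 → ℝ} (hVm : Measurable V) (hV0 : ∀ x, 0 ≤ V x)
    (hVinf : Tendsto V (cocompact E3) atTop) {l : ℝ} (hl : 0 ≤ l) :
    Integrable (fun x => sfun l (V x)) volume := by
  obtain ⟨K, hK, hKV⟩ := sublevel_compact hVinf l
  refine integrable_of_bdd_cpt (measurable_sfun_comp hVm l).aestronglyMeasurable hK
    (C := (l / bTF) ^ ((3:ℝ)/2)) (fun x => ?_) (fun x hx => sfun_zero (hKV x hx).le)
  rw [abs_of_nonneg (sfun_nonneg _ _)]
  exact sfun_le_bound hl (hV0 x)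

/-! ### Lipschitz estimates for `sfun` -/

lemma sfun_lip {l l' v Λ : ℝ} (hv : 0 ≤ v) (hl : l ∈ Set.Icc 0 Λ) (hl' : l' ∈ Set.Icc 0 Λ) :
    |sfun l v - sfun l' v| ≤ (3 * Real.sqrt (Λ/bTF) / bTF) * |l - l'| := by
  have hb := bTF_pos
  have h1 : max (l - v) 0 / bTF ≤ Λ / bTF := by
    apply (div_le_div_iff_of_pos_right hb).2
    exact max_le (by have := hl.2; linarith) (by have := hl.1; linarith [hl.2])
  have h1' : max (l' - v) 0 / bTF ≤ Λ / bTF := by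
    apply (div_le_div_iff_of_pos_right hb).2
    exact max_le (by have := hl'.2; linarith) (by have := hl'.1; linarith [hl'.2])
  have h2 := q_lip (div_nonneg (le_max_right _ _) hb.le)
    (div_nonneg (le_max_right _ _) hb.le) h1 h1'
  refine le_trans h2 ?_
  have h3 : |max (l - v) 0 - max (l' - v) 0| ≤ |l - l'| := by
    have := abs_max_sub_max_le_abs (l - v) (l' - v) 0
    simpa using this
  rw [div_sub_div_same, abs_div, abs_of_pos hb]
  have he : 3 * Real.sqrt (Λ/bTF) * (|max (l - v) 0 - max (l' - v) 0| / bTF)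
      = (3 * Real.sqrt (Λ/bTF) / bTF) * |max (l - v) 0 - max (l' - v) 0| := by ring
  rw [he]
  exact mul_le_mul_of_nonneg_left h3 (by positivity)

lemma sfun_lip_v {l v v' : ℝ} (hl : 0 ≤ l) (hv : 0 ≤ v) (hv' : 0 ≤ v') :
    |sfun l v - sfun l v'| ≤ (3 * Real.sqrt (l/bTF) / bTF) * |v - v'| := by
  have hb := bTF_pos
  have h1 : max (l - v) 0 / bTF ≤ l / bTF := by
    apply (div_le_div_iff_of_pos_right hb).2
    exact max_le (by linarith) hl
  have h1' : max (l - v') 0 / bTF ≤ l / bTF := by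
    apply (div_le_div_iff_of_pos_right hb).2
    exact max_le (by linarith) hl
  have h2 := q_lip (div_nonneg (le_max_right _ _) hb.le)
    (div_nonneg (le_max_right _ _) hb.le) h1 h1'
  refine le_trans h2 ?_
  have h3 : |max (l - v) 0 - max (l - v') 0| ≤ |v - v'| := by
    have := abs_max_sub_max_le_abs (l - v) (l - v') 0
    rw [show l - v - (l - v') = -(v - v') by ring, abs_neg] at this
    exact this
  rw [div_sub_div_same, abs_div, abs_of_pos hb]
  have he : 3 * Real.sqrt (l/bTF) * (|max (l - v) 0 - max (l - v') 0| / bTF)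
      = (3 * Real.sqrt (l/bTF) / bTF) * |max (l - v) 0 - max (l - v') 0| := by ring
  rw [he]
  exact mul_le_mul_of_nonneg_left h3 (by positivity)

/-! ### Existence of the correct chemical potential -/

lemma mass_eq_one {V : E3 → ℝ} (hVm : Measurable V) (hVloc : LocBounded V)
    (hV0 : ∀ x, 0 ≤ V x) (hVinf : Tendsto V (cocompact E3) atTop) :
    ∃ l : ℝ, 0 ≤ l ∧ (∫ x, sfun l (V x)) = 1 := by
  have hb := bTF_pos
  set m : ℝ → ℝ := fun l => ∫ x, sfun l (V x) with hm
  obtain ⟨C, hC⟩ := hVloc (Metric.closedBall (0:E3) 1) (isCompact_closedBall _ _)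
  set v0 : ℝ := (volume (Metric.ball (0:E3) 1)).toReal with hv0
  have hv0pos : 0 < v0 := by
    rw [hv0]
    exact ENNReal.toReal_pos (Metric.measure_ball_pos volume 0 one_pos).ne'
      measure_ball_lt_top.ne
  set T : ℝ := max 1 ((1/v0) ^ ((2:ℝ)/3)) with hT
  have hT1 : (1:ℝ) ≤ T := le_max_left _ _
  have hT0 : (0:ℝ) ≤ T := by linarith
  have hTpow : 1/v0 ≤ T ^ ((3:ℝ)/2) := by
    have h1 : ((1/v0) ^ ((2:ℝ)/3)) ^ ((3:ℝ)/2) = 1/v0 := by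
      rw [← Real.rpow_mul (by positivity)]
      norm_num
    rw [← h1]
    exact Real.rpow_le_rpow (by positivity) (le_max_right _ _) (by norm_num)
  set Λ : ℝ := max C 0 + bTF * T with hΛ
  have hΛ0 : 0 ≤ Λ := by
    have : 0 ≤ bTF * T := by positivity
    rw [hΛ]; linarith [le_max_right C (0:ℝ)]
  have hintΛ : Integrable (fun x => sfun Λ (V x)) volume := Rfun_integrable hVm hV0 hVinf hΛ0
  have hmΛ : 1 ≤ m Λ := by
    have hlow : ∀ x ∈ Metric.ball (0:E3) 1, T ^ ((3:ℝ)/2) ≤ sfun Λ (V x) := by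
      intro x hx
      have hVx : V x ≤ C := le_trans (le_abs_self _) (hC x (Metric.ball_subset_closedBall hx))
      have h1 : bTF * T ≤ max (Λ - V x) 0 := by
        apply le_max_of_le_left
        rw [hΛ]
        have := le_max_left C (0:ℝ)
        linarith
      have h2 : T ≤ max (Λ - V x) 0 / bTF := by
        rw [le_div_iff₀ hb]
        linarith [h1]
      exact Real.rpow_le_rpow hT0 h2 (by norm_num)
    have hstep1 : T ^ ((3:ℝ)/2) * v0 ≤ ∫ x in Metric.ball (0:E3) 1, sfun Λ (V x) := by
      have hconst : ∫ _x in Metric.ball (0:E3) 1, T ^ ((3:ℝ)/2) ∂volume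
          = v0 * T ^ ((3:ℝ)/2) := by
        rw [setIntegral_const, smul_eq_mul, hv0, measureReal_def]
      calc T ^ ((3:ℝ)/2) * v0 = ∫ _x in Metric.ball (0:E3) 1, T ^ ((3:ℝ)/2) ∂volume := by
            rw [hconst]; ring
        _ ≤ ∫ x in Metric.ball (0:E3) 1, sfun Λ (V x) := by
            apply setIntegral_mono_on
              (integrableOn_const measure_ball_lt_top.ne)
              hintΛ.integrableOn Metric.isOpen_ball.measurableSet
            exact hlow
    have hstep2 : (∫ x in Metric.ball (0:E3) 1, sfun Λ (V x)) ≤ m Λ := by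
      apply setIntegral_le_integral hintΛ
      filter_upwards with x
      exact sfun_nonneg _ _
    have hTv : 1 ≤ T ^ ((3:ℝ)/2) * v0 := by
      rw [div_le_iff₀ hv0pos] at hTpow
      linarith
    linarith
  obtain ⟨KΛ, hKΛ, hKΛV⟩ := sublevel_compact hVinf Λ
  set cL : ℝ := (3 * Real.sqrt (Λ/bTF) / bTF) * (volume KΛ).toReal with hcL
  have hcLnn : 0 ≤ cL := by
    rw [hcL]; positivity
  have hmlip : ∀ l ∈ Set.Icc 0 Λ, ∀ l' ∈ Set.Icc 0 Λ, |m l - m l'| ≤ cL * |l - l'| := by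
    intro l hl l' hl'
    have hil : Integrable (fun x => sfun l (V x)) volume := Rfun_integrable hVm hV0 hVinf hl.1
    have hil' : Integrable (fun x => sfun l' (V x)) volume := Rfun_integrable hVm hV0 hVinf hl'.1
    have h1 : m l - m l' = ∫ x, (sfun l (V x) - sfun l' (V x)) := (integral_sub hil hil').symm
    rw [h1]
    have h2 : |∫ x, (sfun l (V x) - sfun l' (V x))| ≤ ∫ x, |sfun l (V x) - sfun l' (V x)| := by
      have := norm_integral_le_integral_norm (μ := volume) (fun x => sfun l (V x) - sfun l' (V x))
      simpa [Real.norm_eq_abs] using this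
    refine le_trans h2 ?_
    have h3 : (∫ x, |sfun l (V x) - sfun l' (V x)|)
        ≤ ∫ x, KΛ.indicator (fun _ => (3 * Real.sqrt (Λ/bTF) / bTF) * |l - l'|) x := by
      apply integral_mono (hil.sub hil').abs
      · exact (integrable_indicator_iff hKΛ.measurableSet).2
          (integrableOn_const hKΛ.measure_lt_top.ne)
      · intro x
        by_cases hx : x ∈ KΛ
        · rw [Set.indicator_of_mem hx]
          exact sfun_lip (hV0 x) hl hl'
        · rw [Set.indicator_of_notMem hx]
          have hVx := hKΛV x hx
          simp only [Pi.sub_apply]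
          rw [sfun_zero (le_trans hl.2 hVx.le), sfun_zero (le_trans hl'.2 hVx.le)]
          simp
    refine le_trans h3 ?_
    rw [integral_indicator_const _ hKΛ.measurableSet, smul_eq_mul, hcL, measureReal_def]
    exact le_of_eq (by ring)
  have hcont : ContinuousOn m (Set.Icc 0 Λ) := by
    have : LipschitzOnWith (Real.toNNReal cL) m (Set.Icc 0 Λ) := by
      apply LipschitzOnWith.of_dist_le_mul
      intro l hl l' hl'
      rw [Real.dist_eq, Real.dist_eq, Real.coe_toNNReal _ hcLnn]
      exact hmlip l hl l' hl'
    exact this.continuousOn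
  have hm0 : m 0 = 0 := by
    rw [hm]
    have : ∀ x, sfun 0 (V x) = 0 := fun x => sfun_zero (hV0 x)
    simp [this]
  have hIVT := intermediate_value_Icc hΛ0 hcont
  have h1mem : (1:ℝ) ∈ Set.Icc (m 0) (m Λ) := by
    rw [hm0]; exact ⟨by norm_num, hmΛ⟩
  obtain ⟨l, hlmem, hml⟩ := hIVT h1mem
  exact ⟨l, hlmem.1, hml⟩

/-! ### The pointwise convexity inequality -/

lemma key_lt {l v t : ℝ} (hl : 0 ≤ l) (hv : 0 ≤ v) (ht : 0 ≤ t) (hne : t ≠ sfun l v) :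
    aTF * (sfun l v) ^ ((5:ℝ)/3) + (v * sfun l v - l * sfun l v)
      < aTF * t ^ ((5:ℝ)/3) + (v * t - l * t) := by
  by_cases hvl : v < l
  · set mq := (l - v) / bTF with hmq
    have hmq0 : 0 < mq := div_pos (by linarith) bTF_pos
    have hsf : sfun l v = mq ^ ((3:ℝ)/2) := by
      unfold sfun; rw [max_eq_left (by linarith)]
    have hspos : 0 < sfun l v := by rw [hsf]; exact Real.rpow_pos_of_pos hmq0 _
    have hs23 : (sfun l v) ^ ((2:ℝ)/3) = mq := by
      rw [hsf, ← Real.rpow_mul hmq0.le]; norm_num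
    have hbdef : (5:ℝ)/3 * aTF = bTF := rfl
    have hbs : 5/3 * aTF * (sfun l v) ^ ((2:ℝ)/3) = l - v := by
      rw [hs23, hbdef, hmq, mul_div_cancel₀ _ bTF_pos.ne']
    have hconv := conv_lt (sfun l v) t hspos ht hne
    have h4 := mul_lt_mul_of_pos_left hconv aTF_pos
    have e : aTF * ((sfun l v) ^ ((5:ℝ)/3) + 5/3 * (sfun l v) ^ ((2:ℝ)/3) * (t - sfun l v))
        = aTF * (sfun l v) ^ ((5:ℝ)/3)
          + (5/3 * aTF * (sfun l v) ^ ((2:ℝ)/3)) * (t - sfun l v) := by ring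
    rw [e, hbs] at h4
    nlinarith [h4]
  · push_neg at hvl
    have hsz : sfun l v = 0 := sfun_zero hvl
    rw [hsz] at hne ⊢
    have ht0 : 0 < t := lt_of_le_of_ne ht (Ne.symm hne)
    have h53 : (0:ℝ) < t ^ ((5:ℝ)/3) := Real.rpow_pos_of_pos ht0 _
    have hlv : l * t ≤ v * t := mul_le_mul_of_nonneg_right hvl ht
    have h0 : (0:ℝ) ^ ((5:ℝ)/3) = 0 := Real.zero_rpow (by norm_num)
    rw [h0]
    nlinarith [aTF_pos]

lemma key_le {l v t : ℝ} (hl : 0 ≤ l) (hv : 0 ≤ v) (ht : 0 ≤ t) :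
    aTF * (sfun l v) ^ ((5:ℝ)/3) + (v * sfun l v - l * sfun l v)
      ≤ aTF * t ^ ((5:ℝ)/3) + (v * t - l * t) := by
  rcases eq_or_ne t (sfun l v) with h | h
  · rw [h]
  · exact (key_lt hl hv ht h).le

/-! ### Lipschitz functions from locally Lipschitz data -/

lemma locLip_bound_on_compact {f : E3 → ℝ} (hf : LocallyLipschitz f)
    {K : Set E3} (hK : IsCompact K) :
    ∃ L : ℝ, 0 ≤ L ∧ ∀ x ∈ K, ∀ y ∈ K, |f x - f y| ≤ L * dist x y := by
  rcases K.eq_empty_or_nonempty with hKe | hKne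
  · exact ⟨0, le_refl _, by simp [hKe]⟩
  have key : ∀ x : E3, ∃ (C : ℝ) (r : ℝ), 0 ≤ C ∧ 0 < r ∧
      ∀ y ∈ Metric.ball x (2*r), ∀ z ∈ Metric.ball x (2*r), |f y - f z| ≤ C * dist y z := by
    intro x
    obtain ⟨Kx, t, ht, hlip⟩ := hf x
    obtain ⟨ε, hε, hball⟩ := Metric.mem_nhds_iff.mp ht
    refine ⟨Kx, ε/2, Kx.coe_nonneg, by linarith, fun y hy z hz => ?_⟩
    have h2 : (2:ℝ) * (ε/2) = ε := by ring
    rw [h2] at hy hz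
    have := hlip.dist_le_mul y (hball hy) z (hball hz)
    rwa [Real.dist_eq] at this
  choose Cf rf hC hr hlip using key
  obtain ⟨s, hsK, hcov⟩ := hK.elim_nhds_subcover (fun x => Metric.ball x (rf x))
    (fun x _ => Metric.ball_mem_nhds x (hr x))
  have hsne : s.Nonempty := by
    obtain ⟨x, hx⟩ := hKne
    have := hcov hx
    simp only [Set.mem_iUnion] at this
    obtain ⟨i, hi, _⟩ := this
    exact ⟨i, hi⟩
  set r0 := s.inf' hsne rf with hr0
  have hr0pos : 0 < r0 := by
    rw [hr0, Finset.lt_inf'_iff]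
    exact fun i _ => hr i
  set C0 := s.sup' hsne Cf with hC0
  have hC0nn : 0 ≤ C0 := by
    obtain ⟨i, hi⟩ := hsne
    exact le_trans (hC i) (Finset.le_sup' Cf hi)
  obtain ⟨B, hB⟩ := hK.exists_bound_of_continuousOn hf.continuous.continuousOn
  have hBnn : 0 ≤ B := by
    obtain ⟨x, hx⟩ := hKne
    exact le_trans (norm_nonneg _) (hB x hx)
  refine ⟨max C0 (2*B/r0), le_trans hC0nn (le_max_left _ _), fun x hx y hy => ?_⟩
  have hd0 : 0 ≤ dist x y := dist_nonneg
  by_cases hd : dist x y < r0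
  · obtain ⟨i, hi, hxi⟩ : ∃ i ∈ s, x ∈ Metric.ball i (rf i) := by
      have := hcov hx
      simp only [Set.mem_iUnion] at this
      obtain ⟨i, hi, h⟩ := this
      exact ⟨i, hi, h⟩
    have hri : r0 ≤ rf i := Finset.inf'_le rf hi
    have hx2 : x ∈ Metric.ball i (2 * rf i) := by
      rw [Metric.mem_ball] at hxi ⊢
      linarith [hr i]
    have hy2 : y ∈ Metric.ball i (2 * rf i) := by
      rw [Metric.mem_ball] at hxi ⊢
      have := dist_triangle y x i
      rw [dist_comm y x] at this
      linarith
    calc |f x - f y| ≤ Cf i * dist x y := hlip i x hx2 y hy2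
      _ ≤ C0 * dist x y := mul_le_mul_of_nonneg_right (Finset.le_sup' Cf hi) hd0
      _ ≤ max C0 (2*B/r0) * dist x y := mul_le_mul_of_nonneg_right (le_max_left _ _) hd0
  · push_neg at hd
    have h1 : |f x - f y| ≤ 2 * B := by
      have h2 := hB x hx
      have h3 := hB y hy
      rw [Real.norm_eq_abs] at h2 h3
      calc |f x - f y| ≤ |f x| + |f y| := abs_sub _ _
        _ ≤ 2 * B := by linarith
    calc |f x - f y| ≤ 2 * B := h1
      _ = (2*B/r0) * r0 := by field_simp
      _ ≤ (2*B/r0) * dist x y := by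
          apply mul_le_mul_of_nonneg_left hd (by positivity)
      _ ≤ max C0 (2*B/r0) * dist x y := mul_le_mul_of_nonneg_right (le_max_right _ _) hd0

lemma lip_of_locLip_const_outside {f : E3 → ℝ} (hf : LocallyLipschitz f)
    {K : Set E3} (hK : IsCompact K) {c : ℝ} (hc : ∀ x ∉ K, f x = c) :
    ∃ L : ℝ, 0 ≤ L ∧ ∀ x y, |f x - f y| ≤ L * dist x y := by
  set K' := Metric.cthickening 1 K with hK'
  have hK'c : IsCompact K' := hK.cthickening
  have hKK' : K ⊆ K' := Metric.self_subset_cthickening K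
  obtain ⟨L₁, hL₁nn, hL₁⟩ := locLip_bound_on_compact hf hK'c
  obtain ⟨B, hB⟩ := hK'c.exists_bound_of_continuousOn
    ((hf.continuous.sub continuous_const).continuousOn (s := K'))
  set L := max L₁ (max B 0) with hL
  refine ⟨L, le_trans hL₁nn (le_max_left _ _), fun x y => ?_⟩
  have hd0 : 0 ≤ dist x y := dist_nonneg
  by_cases hx' : x ∈ K'
  · by_cases hy' : y ∈ K'
    · exact le_trans (hL₁ x hx' y hy')
        (mul_le_mul_of_nonneg_right (le_max_left _ _) hd0)
    · have hyc : f y = c := hc y (fun h => hy' (hKK' h))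
      by_cases hxK : x ∈ K
      · have hd1 : 1 ≤ dist x y := by
          by_contra h
          push_neg at h
          exact hy' (Metric.mem_cthickening_of_dist_le y x 1 K hxK (by rw [dist_comm]; linarith))
        have hfx : |f x - c| ≤ B := by
          have := hB x hx'
          rwa [Real.norm_eq_abs] at this
        calc |f x - f y| = |f x - c| := by rw [hyc]
          _ ≤ B := hfx
          _ ≤ max B 0 * 1 := by rw [mul_one]; exact le_max_left _ _
          _ ≤ max B 0 * dist x y := mul_le_mul_of_nonneg_left hd1 (le_max_right _ _)
          _ ≤ L * dist x y := mul_le_mul_of_nonneg_right (le_max_right _ _) hd0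
      · have hxc : f x = c := hc x hxK
        rw [hxc, hyc, sub_self, abs_zero]
        positivity
  · have hxc : f x = c := hc x (fun h => hx' (hKK' h))
    by_cases hy' : y ∈ K'
    · by_cases hyK : y ∈ K
      · have hd1 : 1 ≤ dist x y := by
          by_contra h
          push_neg at h
          exact hx' (Metric.mem_cthickening_of_dist_le x y 1 K hyK (by linarith))
        have hfy : |f y - c| ≤ B := by
          have := hB y hy'
          rwa [Real.norm_eq_abs] at this
        calc |f x - f y| = |f y - c| := by rw [hxc, abs_sub_comm]
          _ ≤ B := hfy
          _ ≤ max B 0 * 1 := by rw [mul_one]; exact le_max_left _ _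
          _ ≤ max B 0 * dist x y := mul_le_mul_of_nonneg_left hd1 (le_max_right _ _)
          _ ≤ L * dist x y := mul_le_mul_of_nonneg_right (le_max_right _ _) hd0
      · have hyc : f y = c := hc y hyK
        rw [hxc, hyc, sub_self, abs_zero]
        positivity
    · have hyc : f y = c := hc y (fun h => hy' (hKK' h))
      rw [hxc, hyc, sub_self, abs_zero]
      positivity

/-- **Regularity of the Thomas–Fermi minimizer**: `ρ^TF` (as an a.e. equivalence
class) has compact support and is bounded; if moreover `V ∈ W^{1,∞}_loc`
(i.e. `V` is locally Lipschitz) then `ρ^TF ∈ W^{1,∞}` (bounded and Lipschitz). -/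
theorem TF_minimizer_regularity
    (V : E3 → ℝ) (hVm : Measurable V) (hVloc : LocBounded V)
    (hV0 : ∀ x, 0 ≤ V x) (hVinf : Tendsto V (cocompact E3) atTop)
    (ρTF : E3 → ℝ) (hρTF : IsTFMinimizer V ρTF) :
    ∃ ρ' : E3 → ℝ, ρ' =ᵐ[volume] ρTF ∧
      HasCompactSupport ρ' ∧ (∃ C : ℝ, ∀ x, |ρ' x| ≤ C) ∧
      (LocallyLipschitz V → ∃ K : NNReal, LipschitzWith K ρ') := by
  obtain ⟨⟨hρm, hρ0, hρLp, hρVint, hρmass⟩, hρmin⟩ := hρTF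
  obtain ⟨l, hl0, hml⟩ := mass_eq_one hVm hVloc hV0 hVinf
  set ρs : E3 → ℝ := fun x => sfun l (V x) with hρs
  obtain ⟨K, hK, hKV⟩ := sublevel_compact hVinf l
  have hρs_meas : Measurable ρs := measurable_sfun_comp hVm l
  have hρs0 : ∀ x, 0 ≤ ρs x := fun x => sfun_nonneg _ _
  have hρs_zero : ∀ x ∉ K, ρs x = 0 := fun x hx => sfun_zero (hKV x hx).le
  have hbd0 : (0:ℝ) ≤ (l / bTF) ^ ((3:ℝ)/2) :=
    Real.rpow_nonneg (div_nonneg hl0 bTF_pos.le) _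
  have hρs_bd : ∀ x, |ρs x| ≤ (l / bTF) ^ ((3:ℝ)/2) := fun x => by
    rw [abs_of_nonneg (hρs0 x)]; exact sfun_le_bound hl0 (hV0 x)
  have hρs_int : Integrable ρs volume := Rfun_integrable hVm hV0 hVinf hl0
  -- L^{5/3} membership of ρs
  have hρs_Lp : MemLp ρs (5/3) volume :=
    memLp53_of_bdd_cpt hρs_meas.aestronglyMeasurable hK hρs_bd hρs_zero
  -- integrability of V * ρs
  obtain ⟨CK, hCK⟩ := hVloc K hK
  have hρs_Vint : Integrable (fun x => V x * ρs x) volume := by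
    refine integrable_of_bdd_cpt (hVm.mul hρs_meas).aestronglyMeasurable hK
      (C := max CK 0 * (l / bTF) ^ ((3:ℝ)/2)) (fun x => ?_) (fun x hx => ?_)
    · by_cases hx : x ∈ K
      · rw [abs_mul]
        exact mul_le_mul (le_trans (hCK x hx) (le_max_left _ _)) (hρs_bd x)
          (abs_nonneg _) (le_max_right CK 0)
      · rw [hρs_zero x hx, mul_zero, abs_zero]
        positivity
    · rw [hρs_zero x hx, mul_zero]
  have hρs_adm : IsTFAdmissible V ρs := ⟨hρs_meas, hρs0, hρs_Lp, hρs_Vint, hml⟩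
  -- integral identity for admissible densities
  have keyint : ∀ ρ : E3 → ℝ, IsTFAdmissible V ρ →
      Integrable (fun x => aTF * ρ x ^ ((5:ℝ)/3) + (V x * ρ x - l * ρ x)) volume ∧
      (∫ x, (aTF * ρ x ^ ((5:ℝ)/3) + (V x * ρ x - l * ρ x))) = TFfun V ρ - l := by
    rintro ρ ⟨hm, h0, hLp, hVint, hmass⟩
    have hint : Integrable ρ volume := by
      by_contra h
      rw [integral_undef h] at hmass
      norm_num at hmass
    have i1 : Integrable (fun x => aTF * ρ x ^ ((5:ℝ)/3)) volume :=
      (integrable_rpow53 h0 hLp).const_mul aTF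
    have i3 : Integrable (fun x => l * ρ x) volume := hint.const_mul l
    have i23 : Integrable (fun x => V x * ρ x - l * ρ x) volume := hVint.sub i3
    refine ⟨i1.add i23, ?_⟩
    rw [integral_add i1 i23, integral_sub hVint i3, integral_const_mul, integral_const_mul,
      hmass, mul_one]
    have : TFfun V ρ = aTF * (∫ x, ρ x ^ ((5:ℝ)/3)) + ∫ x, V x * ρ x := rfl
    rw [this]
    ring
  -- ρs minimizes among admissible densities
  have hle : ∀ ρ : E3 → ℝ, IsTFAdmissible V ρ → TFfun V ρs ≤ TFfun V ρ := by
    intro ρ hadm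
    obtain ⟨hi, he⟩ := keyint ρ hadm
    obtain ⟨hi', he'⟩ := keyint ρs hρs_adm
    have hmono : (∫ x, (aTF * ρs x ^ ((5:ℝ)/3) + (V x * ρs x - l * ρs x)))
        ≤ ∫ x, (aTF * ρ x ^ ((5:ℝ)/3) + (V x * ρ x - l * ρ x)) := by
      apply integral_mono hi' hi
      intro x
      exact key_le hl0 (hV0 x) (hadm.2.1 x)
    rw [he, he'] at hmono
    linarith
  -- TFfun V ρTF = TFfun V ρs
  have hadmTF : IsTFAdmissible V ρTF := ⟨hρm, hρ0, hρLp, hρVint, hρmass⟩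
  have henergy : TFfun V ρTF = TFfun V ρs := by
    have h1 : TFfun V ρs ≤ TFfun V ρTF := hle ρTF hadmTF
    have h2 : TFenergy V ≤ TFfun V ρs := by
      apply csInf_le
      · exact ⟨TFfun V ρs, fun e ⟨ρ, hadm, he⟩ => he ▸ hle ρ hadm⟩
      · exact ⟨ρs, hρs_adm, rfl⟩
    rw [hρmin] at h1 ⊢
    linarith
  -- a.e. equality
  obtain ⟨hiTF, heTF⟩ := keyint ρTF hadmTF
  obtain ⟨his, hes⟩ := keyint ρs hρs_adm
  set g : E3 → ℝ := fun x => (aTF * ρTF x ^ ((5:ℝ)/3) + (V x * ρTF x - l * ρTF x))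
      - (aTF * ρs x ^ ((5:ℝ)/3) + (V x * ρs x - l * ρs x)) with hg
  have hg_int : Integrable g volume := hiTF.sub his
  have hg0 : ∀ x, 0 ≤ g x := fun x => by
    rw [hg]
    have := key_le (t := ρTF x) hl0 (hV0 x) (hρ0 x)
    simp only [sub_nonneg]
    exact this
  have hgzero : (∫ x, g x) = 0 := by
    rw [hg]
    rw [integral_sub hiTF his, heTF, hes, henergy]
    ring
  have hgae : g =ᵐ[volume] 0 := by
    rw [← integral_eq_zero_iff_of_nonneg hg0 hg_int]
    exact hgzero
  have hae : ρs =ᵐ[volume] ρTF := by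
    filter_upwards [hgae] with x hx
    by_contra hne
    have hlt := key_lt hl0 (hV0 x) (hρ0 x) (fun h => hne (by rw [hρs]; exact h.symm))
    have : 0 < g x := by rw [hg]; simp only [sub_pos]; exact hlt
    rw [hx] at this
    simp at this
  refine ⟨ρs, hae, HasCompactSupport.intro hK hρs_zero, ⟨_, hρs_bd⟩, fun hLip => ?_⟩
  -- Lipschitz regularity when V is locally Lipschitz
  obtain ⟨K1, hK1, hK1V⟩ := sublevel_compact hVinf (l+1)
  set W : E3 → ℝ := fun x => min (V x) (l+1) with hW
  have hWlip : LocallyLipschitz W := hLip.min_const _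
  have hWconst : ∀ x ∉ K1, W x = l + 1 := fun x hx => min_eq_right (hK1V x hx).le
  obtain ⟨Lw, hLwnn, hLw⟩ := lip_of_locLip_const_outside hWlip hK1 hWconst
  have hW0 : ∀ x, 0 ≤ W x := fun x => le_min (hV0 x) (by linarith)
  have hWeq : ∀ x, ρs x = sfun l (W x) := by
    intro x
    by_cases h : V x ≤ l + 1
    · rw [hρs, hW]
      simp only [min_eq_left h]
    · push_neg at h
      have hmin : min (V x) (l+1) = l + 1 := min_eq_right (by linarith)
      rw [hρs, hW]
      simp only [hmin]
      rw [sfun_zero (by linarith : l ≤ V x), sfun_zero (by linarith : l ≤ l + 1)]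
  set c2 : ℝ := (3 * Real.sqrt (l/bTF) / bTF) * Lw with hc2
  have hc2nn : 0 ≤ c2 := by
    have h1 : (0:ℝ) ≤ 3 * Real.sqrt (l/bTF) / bTF :=
      div_nonneg (by positivity) bTF_pos.le
    exact mul_nonneg h1 hLwnn
  refine ⟨Real.toNNReal c2, LipschitzWith.of_dist_le_mul fun x y => ?_⟩
  rw [Real.dist_eq, Real.coe_toNNReal _ hc2nn, hWeq x, hWeq y]
  calc |sfun l (W x) - sfun l (W y)| ≤ (3 * Real.sqrt (l/bTF) / bTF) * |W x - W y| :=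
        sfun_lip_v hl0 (hW0 x) (hW0 y)
    _ ≤ (3 * Real.sqrt (l/bTF) / bTF) * (Lw * dist x y) := by
        apply mul_le_mul_of_nonneg_left (hLw x y)
          (div_nonneg (by positivity) bTF_pos.le)
    _ = c2 * dist x y := by rw [hc2]; ring
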